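/- arXiv:2402.08018 — 2 statements merged into one kernel-verified Lean document; each statement's English description precedes it below -/
import Mathlib

section
/- (KNN vs Monte Carlo variance bound) Let ℓ_i = p_t(z|x^{(i)}) > 0 be Gaussian forward likelihoods, K ⊆ {1,...,N} the indices of the k largest ℓ_i, with ℓ_k = min_{i∈K} ℓ_i, and define the KNN proposal q_i = ℓ_i/Z_q for i ∈ K and q_i = ℓ_k/Z_q for i ∉ K, where Z_q = Σ_{i∈K} ℓ_i + (N−k) ℓ_k. Let p_i = ℓ_i / (N p_t(z)) with p_t(z) = (1/N)Σ_i ℓ_i be the posterior. Then Σ_i (p_i²/q_i)‖x^{(i)} − μ‖² ≤ (Z_q / p_t(z)) Σ_i p_i ‖x^{(i)} − μ‖², where μ = Σ_i p_i x^{(i)}. Equivalently Tr(Cov(μ̂_KNN)) ≤ (Z_q/p_t(z))·Tr(Cov(μ̂_MC)) for any fixed sample size n ≥ 1. -/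
/-!
The importance weight p_i / q_i equals (ℓ_i / w_i) · Z_q / (N p_t(z)), where w_i is ℓ_i on K and
ℓ_k off K. Since ℓ_i ≤ w_i by the choice of K, every weight is at most Z_q / (N p_t(z)) ≤ Z_q / p_t(z),
and p_i² / q_i = p_i · (p_i / q_i) turns this into a termwise comparison of the two traces.
-/

open Finset

theorem div_div_div_le_div_of_le {ℓ w Z S : ℝ} (hℓ : 0 < ℓ) (hw : ℓ ≤ w) (hZ : 0 ≤ Z)
    (hS : 0 ≤ S) : ℓ / S / (w / Z) ≤ Z / S := by
  calc ℓ / S / (w / Z) = ℓ / w * (Z / S) := by rw [div_div_eq_mul_div]; ring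
    _ ≤ Z / S := mul_le_of_le_one_left (div_nonneg hZ hS) ((div_le_one (hℓ.trans_le hw)).2 hw)

theorem sum_sq_div_mul_le_of_div_le {ι : Type*} (s : Finset ι) {p q e : ι → ℝ} {c : ℝ}
    (hp : ∀ i ∈ s, 0 ≤ p i) (he : ∀ i ∈ s, 0 ≤ e i) (hpq : ∀ i ∈ s, p i / q i ≤ c) :
    ∑ i ∈ s, p i ^ 2 / q i * e i ≤ c * ∑ i ∈ s, p i * e i := by
  rw [mul_sum]
  refine sum_le_sum fun i hi => ?_
  calc p i ^ 2 / q i * e i = p i / q i * (p i * e i) := by ring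
    _ ≤ c * (p i * e i) := mul_le_mul_of_nonneg_right (hpq i hi) (mul_nonneg (hp i hi) (he i hi))

theorem knn_vs_mc_trace_bound_general
    (d N n k : ℕ) (hkN : k ≤ N)
    (x : Fin N → EuclideanSpace ℝ (Fin d))
    (ℓ : Fin N → ℝ) (hℓ : ∀ i, 0 < ℓ i)
    (K : Finset (Fin N))
    (ℓk : ℝ) (hℓk_mem : ∃ i ∈ K, ℓ i = ℓk)
    (hout : ∀ i ∉ K, ℓ i ≤ ℓk)
    (ptz : ℝ) (hptz : ptz = (1 / (N : ℝ)) * ∑ i, ℓ i)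
    (p : Fin N → ℝ) (hp : ∀ i, p i = ℓ i / ((N : ℝ) * ptz))
    (Zq : ℝ) (hZq : Zq = (∑ i ∈ K, ℓ i) + ((N : ℝ) - (k : ℝ)) * ℓk)
    (q : Fin N → ℝ)
    (hq : ∀ i, q i = if i ∈ K then ℓ i / Zq else ℓk / Zq)
    (μ : EuclideanSpace ℝ (Fin d)) :
    (1 / (n : ℝ)) * ∑ i, (p i ^ 2 / q i) * ‖x i - μ‖ ^ 2
      ≤ (Zq / ptz) * ((1 / (n : ℝ)) * ∑ i, p i * ‖x i - μ‖ ^ 2) := by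
  obtain ⟨j, -, hj⟩ := hℓk_mem
  have hZq0 : 0 ≤ Zq := hZq ▸ add_nonneg (sum_nonneg fun i _ => (hℓ i).le)
    (mul_nonneg (sub_nonneg.2 (by exact_mod_cast hkN)) (hj ▸ hℓ j).le)
  have hptz0 : 0 ≤ ptz := hptz ▸ mul_nonneg (by positivity) (sum_nonneg fun i _ => (hℓ i).le)
  have hweight : ∀ i, p i / q i ≤ Zq / ptz := fun i => by
    have hN : (1 : ℝ) ≤ N := Nat.one_le_cast.2 i.pos
    have hptz_pos : 0 < ptz := hptz ▸ mul_pos (one_div_pos.2 (by linarith))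
      (sum_pos (fun i _ => hℓ i) ⟨i, mem_univ i⟩)
    calc p i / q i ≤ Zq / (N * ptz) := by
          rw [hp i, hq i]
          split_ifs with hi
          · exact div_div_div_le_div_of_le (hℓ i) le_rfl hZq0 (by positivity)
          · exact div_div_div_le_div_of_le (hℓ i) (hout i hi) hZq0 (by positivity)
      _ ≤ Zq / ptz := div_le_div_of_nonneg_left hZq0 hptz_pos (le_mul_of_one_le_left hptz0 hN)
  rw [mul_left_comm]
  exact mul_le_mul_of_nonneg_left (sum_sq_div_mul_le_of_div_le univ
    (fun i _ => hp i ▸ by have := hℓ i; positivity) (fun i _ => by positivity)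
    (fun i _ => hweight i)) (by positivity)

/-- Theorem 1, KNN vs Monte Carlo variance bound:
Tr(Cov(μ̂_KNN)) ≤ (Z_q / p_t(z)) · Tr(Cov(μ̂_MC)). -/
theorem knn_vs_mc_trace_bound
    (d N n k : ℕ) (hN : 0 < N) (hn : 1 ≤ n) (hk : 1 ≤ k) (hkN : k ≤ N)
    (x : Fin N → EuclideanSpace ℝ (Fin d))
    (ℓ : Fin N → ℝ) (hℓ : ∀ i, 0 < ℓ i)
    (K : Finset (Fin N)) (hK : K.card = k)
    (ℓk : ℝ) (hℓk_mem : ∃ i ∈ K, ℓ i = ℓk)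
    (hℓk_min : ∀ i ∈ K, ℓk ≤ ℓ i)
    (hout : ∀ i ∉ K, ℓ i ≤ ℓk)
    (ptz : ℝ) (hptz : ptz = (1 / (N : ℝ)) * ∑ i, ℓ i)
    (p : Fin N → ℝ) (hp : ∀ i, p i = ℓ i / ((N : ℝ) * ptz))
    (Zq : ℝ) (hZq : Zq = (∑ i ∈ K, ℓ i) + ((N : ℝ) - (k : ℝ)) * ℓk)
    (q : Fin N → ℝ)
    (hq : ∀ i, q i = if i ∈ K then ℓ i / Zq else ℓk / Zq)
    (μ : EuclideanSpace ℝ (Fin d)) (hμ : μ = ∑ i, p i • x i) :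
    (1 / (n : ℝ)) * ∑ i, (p i ^ 2 / q i) * ‖x i - μ‖ ^ 2
      ≤ (Zq / ptz) * ((1 / (n : ℝ)) * ∑ i, p i * ‖x i - μ‖ ^ 2) :=
  knn_vs_mc_trace_bound_general d N n k hkN x ℓ hℓ K ℓk hℓk_mem hout ptz hptz p hp Zq hZq q hq μ
end

section
/- (KNN vs uniform SNIS bound) Under the KNN proposal setup, Tr(Cov(μ̂_KNN)) ≤ (1 − Σ_{i∉K} ℓ_i / (N p_t(z))) · Tr(Cov(μ̂_MC)) + ((N−k)/N) · Tr(Cov(μ̂_U)), where Tr(Cov(μ̂_MC)) = (1/n)Σ_i p_i‖x^{(i)}−μ‖² and Tr(Cov(μ̂_U)) = (N/n)Σ_i p_i²‖x^{(i)}−μ‖². -/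
/-!
With `S = ∑ ℓ`, `L = ∑_{K} ℓ` and `r_i = max ℓ_i ℓ_k` the proposal is `q_i = r_i / Z_q`, so
`p_i² / q_i = ℓ_i² (L + (N - k) ℓ_k) / (S² r_i)`. Since `ℓ_i ≤ r_i` and `ℓ_k ≤ r_i`, this is at most
`(L / S) p_i + (N - k) p_i²` term by term, and `L / S = 1 - ∑_{i ∉ K} ℓ_i / (N p_t(z))`.
Weighting by `‖x_i - μ‖²` and summing gives the bound.
-/

open Finset

lemma sq_mul_add_div_le {a L m c r : ℝ} (ha : 0 ≤ a) (hL : 0 ≤ L) (hm : 0 ≤ m)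
    (har : a ≤ r) (hcr : c ≤ r) :
    a ^ 2 * (L + m * c) / r ≤ a * L + m * a ^ 2 := by
  rcases (ha.trans har).eq_or_lt with hr | hr
  · rw [← hr, div_zero]
    positivity
  · rw [div_le_iff₀ hr]
    nlinarith [mul_le_mul_of_nonneg_left har (mul_nonneg ha hL),
      mul_le_mul_of_nonneg_left hcr (mul_nonneg hm (sq_nonneg a))]

lemma div_sq_div_div_le {a S L m c r : ℝ} (ha : 0 ≤ a) (hL : 0 ≤ L) (hm : 0 ≤ m)
    (har : a ≤ r) (hcr : c ≤ r) :
    (a / S) ^ 2 / (r / (L + m * c)) ≤ L / S * (a / S) + m * (a / S) ^ 2 := by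
  have key := div_le_div_of_nonneg_right (sq_mul_add_div_le ha hL hm har hcr) (sq_nonneg S)
  calc (a / S) ^ 2 / (r / (L + m * c)) = a ^ 2 * (L + m * c) / r / S ^ 2 := by
        rw [div_div_eq_mul_div, div_pow]; ring
    _ ≤ (a * L + m * a ^ 2) / S ^ 2 := key
    _ = L / S * (a / S) + m * (a / S) ^ 2 := by ring

theorem knn_vs_uniform_trace_bound_general
    (d N n k : ℕ) (hN : 0 < N) (hkN : k ≤ N)
    (x : Fin N → EuclideanSpace ℝ (Fin d))
    (ℓ : Fin N → ℝ) (hℓ : ∀ i, 0 < ℓ i)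
    (K : Finset (Fin N))
    (ℓk : ℝ)
    (hℓk_min : ∀ i ∈ K, ℓk ≤ ℓ i)
    (hout : ∀ i ∉ K, ℓ i ≤ ℓk)
    (ptz : ℝ) (hptz : ptz = (1 / (N : ℝ)) * ∑ i, ℓ i)
    (p : Fin N → ℝ) (hp : ∀ i, p i = ℓ i / ((N : ℝ) * ptz))
    (Zq : ℝ) (hZq : Zq = (∑ i ∈ K, ℓ i) + ((N : ℝ) - (k : ℝ)) * ℓk)
    (q : Fin N → ℝ)
    (hq : ∀ i, q i = if i ∈ K then ℓ i / Zq else ℓk / Zq)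
    (μ : EuclideanSpace ℝ (Fin d)) :
    (1 / (n : ℝ)) * ∑ i, (p i ^ 2 / q i) * ‖x i - μ‖ ^ 2
      ≤ (1 - (∑ i ∈ Kᶜ, ℓ i) / ((N : ℝ) * ptz)) *
          ((1 / (n : ℝ)) * ∑ i, p i * ‖x i - μ‖ ^ 2)
        + (((N : ℝ) - (k : ℝ)) / (N : ℝ)) *
          (((N : ℝ) / (n : ℝ)) * ∑ i, p i ^ 2 * ‖x i - μ‖ ^ 2) := by
  set S := ∑ i, ℓ i
  set L := ∑ i ∈ K, ℓ i
  set m := (N : ℝ) - k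
  have hS : (N : ℝ) * ptz = S := by rw [hptz]; field_simp
  have hSpos : 0 < S := sum_pos (fun i _ ↦ hℓ i) ⟨⟨0, hN⟩, mem_univ _⟩
  have hm : 0 ≤ m := sub_nonneg.mpr (Nat.cast_le.mpr hkN)
  have hL : 0 ≤ L := sum_nonneg fun i _ ↦ (hℓ i).le
  have hcoeff : 1 - (∑ i ∈ Kᶜ, ℓ i) / (N * ptz) = L / S := by
    have hsplit : L + ∑ i ∈ Kᶜ, ℓ i = S := sum_add_sum_compl K ℓ
    rw [hS]
    field_simp
    linarith
  have hweight : ∀ i, p i ^ 2 / q i ≤ L / S * p i + m * p i ^ 2 := by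
    intro i
    rw [hp, hq, hS, hZq]
    split_ifs with hi
    · exact div_sq_div_div_le (hℓ i).le hL hm le_rfl (hℓk_min i hi)
    · exact div_sq_div_div_le (hℓ i).le hL hm (hout i hi) le_rfl
  calc (1 / (n : ℝ)) * ∑ i, (p i ^ 2 / q i) * ‖x i - μ‖ ^ 2
      ≤ (1 / (n : ℝ)) * ∑ i, (L / S * p i + m * p i ^ 2) * ‖x i - μ‖ ^ 2 := by
        gcongr with i
        exact hweight i
    _ = _ := by
        simp only [add_mul, sum_add_distrib, mul_assoc, ← mul_sum, hcoeff]
        field_simp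

/-- Theorem 2, KNN vs uniform SNIS bound:
Tr(Cov(μ̂_KNN)) ≤ (1 − Σ_{i∉K} ℓ_i/(N p_t(z)))·Tr(Cov(μ̂_MC))
  + ((N−k)/N)·Tr(Cov(μ̂_U)). -/
theorem knn_vs_uniform_trace_bound
    (d N n k : ℕ) (hN : 0 < N) (hn : 1 ≤ n) (hk : 1 ≤ k) (hkN : k ≤ N)
    (x : Fin N → EuclideanSpace ℝ (Fin d))
    (ℓ : Fin N → ℝ) (hℓ : ∀ i, 0 < ℓ i)
    (K : Finset (Fin N)) (hK : K.card = k)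
    (ℓk : ℝ) (hℓk_mem : ∃ i ∈ K, ℓ i = ℓk)
    (hℓk_min : ∀ i ∈ K, ℓk ≤ ℓ i)
    (hout : ∀ i ∉ K, ℓ i ≤ ℓk)
    (ptz : ℝ) (hptz : ptz = (1 / (N : ℝ)) * ∑ i, ℓ i)
    (p : Fin N → ℝ) (hp : ∀ i, p i = ℓ i / ((N : ℝ) * ptz))
    (Zq : ℝ) (hZq : Zq = (∑ i ∈ K, ℓ i) + ((N : ℝ) - (k : ℝ)) * ℓk)
    (q : Fin N → ℝ)
    (hq : ∀ i, q i = if i ∈ K then ℓ i / Zq else ℓk / Zq)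
    (μ : EuclideanSpace ℝ (Fin d)) (hμ : μ = ∑ i, p i • x i) :
    (1 / (n : ℝ)) * ∑ i, (p i ^ 2 / q i) * ‖x i - μ‖ ^ 2
      ≤ (1 - (∑ i ∈ Kᶜ, ℓ i) / ((N : ℝ) * ptz)) *
          ((1 / (n : ℝ)) * ∑ i, p i * ‖x i - μ‖ ^ 2)
        + (((N : ℝ) - (k : ℝ)) / (N : ℝ)) *
          (((N : ℝ) / (n : ℝ)) * ∑ i, p i ^ 2 * ‖x i - μ‖ ^ 2) :=
  knn_vs_uniform_trace_bound_general d N n k hN hkN x ℓ hℓ K ℓk hℓk_min hout ptz hptz p hp Zq hZq q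
    hq μ
end
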